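/- arXiv:2307.12963 — 5 statements merged into one kernel-verified Lean document; each statement's English description precedes it below -/
import Mathlib

section
/- For a real number t with 0 < t < 1, there exists a constant C > 0 such that for all real X, the real part of Li₂(e^{2πi(t+Xi)})/(2πi) lies within distance C of the function which equals 0 if X ≥ 0 and equals 2π(t - 1/2)X if X < 0. -/
open Complex

/-- The dilogarithm, defined by integrating `-log(1-x)/x` along the segment from `0` to `z`. -/
noncomputable def dilog (z : ℂ) : ℂ :=
  -∫ t in (0:ℝ)..1, Complex.log (1 - (t:ℂ) * z) / t

/-!
Put `θ = 2πt ∈ (0, 2π)` and `R = e^{-2πX}`. The substitution `u = Rs` gives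
`Im Li₂(R e^{iθ}) = -∫₀^R arg(1 - u e^{iθ}) du / u`. For `u ≤ 1` the point `1 - u e^{iθ}` lies in
the half plane `Re ≥ min 1 (1 - cos θ)`, so its argument is `O(u)` and the integrand is bounded.
For `u ≥ 1` we have `1 - u e^{iθ} = e^{i(θ - π)} (u - e^{-iθ})`, where now `Re ≥ min 1 (1 - cos θ) u`,
so the integrand is `(θ - π)/u + O(1/u²)`. Hence `Im Li₂(R e^{iθ}) = -(θ - π) max 0 (log R) + O(1)`,
and dividing by `2π` gives the estimate.
-/

open scoped Real
open Set MeasureTheory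

namespace Real

lemma abs_le_abs_tan {x : ℝ} (hx : |x| < π / 2) : |x| ≤ |tan x| := by
  rcases le_total 0 x with h | h
  · rw [abs_of_nonneg h] at hx ⊢
    exact (le_tan h hx).trans (le_abs_self _)
  · rw [abs_of_nonpos h] at hx ⊢
    rw [← abs_neg, ← tan_neg]
    exact (le_tan (neg_nonneg.2 h) hx).trans (le_abs_self _)

lemma cos_lt_one_of_pos_of_lt_two_pi {θ : ℝ} (h0 : 0 < θ) (h2 : θ < 2 * π) : cos θ < 1 :=
  (cos_le_one θ).lt_of_ne fun h =>
    h0.ne' ((cos_eq_one_iff_of_lt_of_lt (by linarith [pi_pos]) h2).1 h)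

lemma min_one_one_sub_cos_le (θ : ℝ) {u : ℝ} (hu0 : 0 ≤ u) (hu1 : u ≤ 1) :
    min 1 (1 - cos θ) ≤ 1 - u * cos θ := by
  rcases le_total 0 (cos θ) with h | h
  · exact (min_le_right _ _).trans (by nlinarith)
  · exact (min_le_left _ _).trans (by nlinarith)

end Real

lemma integral_one_div_sq {a b : ℝ} (h : (0:ℝ) ∉ uIcc a b) :
    ∫ u in a..b, 1 / u ^ 2 = a⁻¹ - b⁻¹ := by
  have := integral_zpow (n := -2) (Or.inr ⟨by norm_num, h⟩)
  norm_num at this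
  simp only [one_div, this]
  ring

namespace Complex

lemma abs_arg_le_abs_im_div_re {w : ℂ} (hw : 0 < w.re) : |w.arg| ≤ |w.im| / w.re := by
  rw [← abs_of_pos hw, ← abs_div, ← tan_arg]
  exact Real.abs_le_abs_tan (abs_arg_lt_pi_div_two_iff.2 (Or.inl hw))

lemma re_one_sub_mul_exp (θ u : ℝ) : (1 - u * exp (θ * I)).re = 1 - u * Real.cos θ := by
  simp [exp_ofReal_mul_I_re]

lemma im_one_sub_mul_exp (θ u : ℝ) : (1 - u * exp (θ * I)).im = -(u * Real.sin θ) := by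
  simp [exp_ofReal_mul_I_im]

lemma re_sub_exp_neg (θ u : ℝ) : ((u : ℂ) - exp (-θ * I)).re = u - Real.cos θ := by
  rw [← ofReal_neg, sub_re, exp_ofReal_mul_I_re, Real.cos_neg, ofReal_re]

lemma im_sub_exp_neg (θ u : ℝ) : ((u : ℂ) - exp (-θ * I)).im = Real.sin θ := by
  rw [← ofReal_neg, sub_im, exp_ofReal_mul_I_im, Real.sin_neg, ofReal_im, zero_sub, neg_neg]

lemma one_sub_mul_exp_eq (θ u : ℝ) :
    1 - u * exp (θ * I) = exp ((θ - π : ℝ) * I) * (u - exp (-θ * I)) := by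
  push_cast
  rw [sub_mul, exp_sub, exp_pi_mul_I, neg_mul, exp_neg]
  field_simp
  ring

lemma arg_exp_sub_pi_mul_I {θ : ℝ} (h0 : 0 < θ) (h2 : θ < 2 * π) :
    (exp ((θ - π : ℝ) * I)).arg = θ - π := by
  rw [exp_mul_I, arg_cos_add_sin_mul_I ⟨by linarith, by linarith⟩]

lemma one_sub_mul_exp_mem_slitPlane {θ u : ℝ} (hθ : Real.cos θ < 1) (hu : 0 ≤ u) :
    1 - u * exp (θ * I) ∈ slitPlane := by
  rw [mem_slitPlane_iff, re_one_sub_mul_exp, im_one_sub_mul_exp]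
  rcases le_or_gt (Real.cos θ) 0 with hc | hc
  · left; nlinarith
  rcases hu.eq_or_lt with rfl | hu
  · left; simp
  · right
    have hs : Real.sin θ ≠ 0 := fun hs => by nlinarith [Real.sin_sq_add_cos_sq θ]
    exact neg_ne_zero.2 (mul_ne_zero hu.ne' hs)

lemma abs_arg_one_sub_mul_exp_le {θ u : ℝ} (hθ : Real.cos θ < 1) (hu0 : 0 ≤ u) (hu1 : u ≤ 1) :
    |(1 - u * exp (θ * I)).arg| ≤ u / min 1 (1 - Real.cos θ) := by
  have hδ : 0 < min 1 (1 - Real.cos θ) := lt_min one_pos (by linarith)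
  have hre := Real.min_one_one_sub_cos_le θ hu0 hu1
  rw [← re_one_sub_mul_exp] at hre
  refine (abs_arg_le_abs_im_div_re (hδ.trans_le hre)).trans (div_le_div₀ hu0 ?_ hδ hre)
  rw [im_one_sub_mul_exp, abs_neg, abs_mul, abs_of_nonneg hu0]
  exact mul_le_of_le_one_right hu0 (Real.abs_sin_le_one θ)

lemma arg_one_sub_mul_exp {θ u : ℝ} (h0 : 0 < θ) (h2 : θ < 2 * π) (hu : 1 ≤ u) :
    (1 - u * exp (θ * I)).arg = θ - π + ((u : ℂ) - exp (-θ * I)).arg := by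
  set w : ℂ := u - exp (-θ * I)
  have hre : 0 < w.re := by
    rw [re_sub_exp_neg]
    linarith [Real.cos_lt_one_of_pos_of_lt_two_pi h0 h2]
  have hw := abs_lt.1 (abs_arg_lt_pi_div_two_iff.2 (Or.inl hre))
  have hw0 : w ≠ 0 := fun h => hre.ne' (by rw [h, zero_re])
  -- `arg w` has the sign of `sin θ`, opposite to that of `θ - π`, so the sum stays in `(-π, π]`.
  have hsum : θ - π + w.arg ∈ Ioc (-π) π := by
    rcases le_or_gt 0 w.im with him | him
    · have hθ : θ ≤ π := by
        by_contra! hθ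
        have := Real.sin_pos_of_pos_of_lt_pi (x := θ - π) (by linarith) (by linarith)
        rw [Real.sin_sub_pi, ← im_sub_exp_neg θ u] at this
        linarith
      have := arg_nonneg_iff.2 him
      constructor <;> linarith
    · have hθ : π < θ := by
        by_contra! hθ
        have := Real.sin_nonneg_of_nonneg_of_le_pi h0.le hθ
        rw [← im_sub_exp_neg θ u] at this
        linarith
      have := arg_neg_iff.2 him
      constructor <;> linarith
  rw [one_sub_mul_exp_eq, arg_mul (exp_ne_zero _) hw0 (by rwa [arg_exp_sub_pi_mul_I h0 h2]),
    arg_exp_sub_pi_mul_I h0 h2]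

lemma abs_arg_one_sub_mul_exp_sub_le {θ u : ℝ} (h0 : 0 < θ) (h2 : θ < 2 * π) (hu : 1 ≤ u) :
    |(1 - u * exp (θ * I)).arg - (θ - π)| ≤ 1 / (min 1 (1 - Real.cos θ) * u) := by
  have hδ : 0 < min 1 (1 - Real.cos θ) :=
    lt_min one_pos (by linarith [Real.cos_lt_one_of_pos_of_lt_two_pi h0 h2])
  have hu0 : 0 < u := one_pos.trans_le hu
  have hre : min 1 (1 - Real.cos θ) * u ≤ ((u : ℂ) - exp (-θ * I)).re := by
    have := Real.min_one_one_sub_cos_le θ (inv_nonneg.2 hu0.le) (inv_le_one_of_one_le₀ hu)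
    rw [re_sub_exp_neg]
    calc min 1 (1 - Real.cos θ) * u ≤ (1 - u⁻¹ * Real.cos θ) * u := by gcongr
      _ = u - Real.cos θ := by field_simp
  rw [arg_one_sub_mul_exp h0 h2 hu, add_sub_cancel_left]
  refine (abs_arg_le_abs_im_div_re ((mul_pos hδ hu0).trans_le hre)).trans
    (div_le_div₀ zero_le_one ?_ (mul_pos hδ hu0) hre)
  rw [im_sub_exp_neg]
  exact Real.abs_sin_le_one θ

/-- The integrand agrees off `0` with the difference quotient `dslope` of `u ↦ log (1 - u z)` at
`0`, which is continuous. -/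
lemma intervalIntegrable_log_one_sub_mul_div {z : ℂ} {R : ℝ}
    (hz : ∀ u ∈ uIcc 0 R, 1 - (u : ℂ) * z ∈ slitPlane) :
    IntervalIntegrable (fun u : ℝ => log (1 - u * z) / u) volume 0 R := by
  set f : ℝ → ℂ := fun u => log (1 - u * z)
  set U : Set ℝ := {u | 1 - (u : ℂ) * z ∈ slitPlane}
  have hU : IsOpen U := isOpen_slitPlane.preimage (by fun_prop)
  have hf : ContinuousOn f U := fun u hu =>
    ((continuousAt_clog hu).comp (f := fun u : ℝ => 1 - (u : ℂ) * z)
      (by fun_prop)).continuousWithinAt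
  have hf0 : DifferentiableAt ℝ f 0 := by
    have : HasDerivAt (fun u : ℝ => 1 - (u : ℂ) * z) (-(1 * z)) 0 :=
      ((hasDerivAt_id (0 : ℝ)).ofReal_comp.mul_const z).const_sub 1
    exact (this.clog_real (by simp)).differentiableAt
  have hslope : ContinuousOn (dslope f 0) U :=
    (continuousOn_dslope (hU.mem_nhds (by simp [U]))).2 ⟨hf, hf0⟩
  refine ((hslope.mono hz).intervalIntegrable).congr_uIoo fun u hu => ?_
  have hu0 : u ≠ 0 := by rintro rfl; simp [uIoo] at hu; linarith [hu.1, hu.2]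
  simp [dslope_of_ne _ hu0, slope_def_module, f, div_eq_inv_mul]

lemma intervalIntegrable_log_one_sub_mul_exp_div {θ R : ℝ} (hθ : Real.cos θ < 1) (hR : 0 ≤ R) :
    IntervalIntegrable (fun u : ℝ => log (1 - u * exp (θ * I)) / u) volume 0 R :=
  intervalIntegrable_log_one_sub_mul_div
    fun u hu => one_sub_mul_exp_mem_slitPlane hθ (by rw [uIcc_of_le hR] at hu; exact hu.1)

lemma intervalIntegrable_arg_one_sub_mul_exp_div {θ R : ℝ} (hθ : Real.cos θ < 1) (hR : 0 ≤ R) :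
    IntervalIntegrable (fun u : ℝ => (1 - u * exp (θ * I)).arg / u) volume 0 R := by
  have h := intervalIntegrable_log_one_sub_mul_exp_div hθ hR
  have him : IntervalIntegrable (fun u : ℝ => (log (1 - u * exp (θ * I)) / u).im) volume 0 R :=
    ⟨h.1.im, h.2.im⟩
  exact him.congr fun u _ => by simp [log_im]

lemma abs_integral_arg_one_sub_mul_exp_div_le {θ R : ℝ} (hθ : Real.cos θ < 1)
    (hR0 : 0 ≤ R) (hR1 : R ≤ 1) :
    |∫ u in (0:ℝ)..R, (1 - u * exp (θ * I)).arg / u| ≤ 1 / min 1 (1 - Real.cos θ) := by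
  have hδ : 0 < min 1 (1 - Real.cos θ) := lt_min one_pos (by linarith)
  have hbound : ∀ u ∈ uIoc 0 R,
      ‖(1 - u * exp (θ * I)).arg / u‖ ≤ 1 / min 1 (1 - Real.cos θ) := by
    intro u hu
    rw [uIoc_of_le hR0] at hu
    rw [Real.norm_eq_abs, abs_div, abs_of_pos hu.1, div_le_iff₀ hu.1, one_div_mul_eq_div]
    exact abs_arg_one_sub_mul_exp_le hθ hu.1.le (hu.2.trans hR1)
  calc |∫ u in (0:ℝ)..R, (1 - u * exp (θ * I)).arg / u|
      ≤ 1 / min 1 (1 - Real.cos θ) * |R - 0| :=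
        intervalIntegral.norm_integral_le_of_norm_le_const hbound
    _ ≤ 1 / min 1 (1 - Real.cos θ) * 1 := by
        rw [sub_zero, abs_of_nonneg hR0]; gcongr
    _ = 1 / min 1 (1 - Real.cos θ) := mul_one _

lemma abs_integral_arg_one_sub_mul_exp_div_sub_le {θ R : ℝ} (h0 : 0 < θ) (h2 : θ < 2 * π)
    (hR : 1 ≤ R) :
    |(∫ u in (0:ℝ)..R, (1 - u * exp (θ * I)).arg / u) - (θ - π) * Real.log R|
      ≤ 2 / min 1 (1 - Real.cos θ) := by
  have hθ := Real.cos_lt_one_of_pos_of_lt_two_pi h0 h2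
  set δ := min 1 (1 - Real.cos θ)
  have hδ : 0 < δ := lt_min one_pos (by linarith)
  set h : ℝ → ℝ := fun u => (1 - u * exp (θ * I)).arg / u
  have hint := intervalIntegrable_arg_one_sub_mul_exp_div hθ (zero_le_one.trans hR)
  have h01 : IntervalIntegrable h volume 0 1 :=
    hint.mono_set (uIcc_subset_uIcc_left (mem_uIcc_of_le zero_le_one hR))
  have h1R : IntervalIntegrable h volume 1 R :=
    hint.mono_set (uIcc_subset_uIcc (mem_uIcc_of_le zero_le_one hR) right_mem_uIcc)
  have hpos : ∀ u ∈ uIcc 1 R, 0 < u := fun u hu => by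
    rw [uIcc_of_le hR] at hu; linarith [hu.1]
  have hinv : IntervalIntegrable (fun u : ℝ => (θ - π) / u) volume 1 R :=
    (continuousOn_const.div continuousOn_id fun u hu => (hpos u hu).ne').intervalIntegrable
  have hsq : IntervalIntegrable (fun u : ℝ => 1 / δ * (1 / u ^ 2)) volume 1 R :=
    (continuousOn_const.mul (continuousOn_const.div (continuousOn_pow 2)
      fun u hu => (pow_pos (hpos u hu) 2).ne')).intervalIntegrable
  have hlog : ∫ u in (1:ℝ)..R, (θ - π) / u = (θ - π) * Real.log R := by
    simp only [div_eq_mul_inv, intervalIntegral.integral_const_mul,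
      integral_inv fun h0 => (hpos 0 h0).false, inv_one, mul_one]
  have herr : |∫ u in (1:ℝ)..R, (h u - (θ - π) / u)| ≤ 1 / δ := by
    have hpt : ∀ u ∈ Ioc 1 R, ‖h u - (θ - π) / u‖ ≤ 1 / δ * (1 / u ^ 2) := fun u hu => by
      have hu0 : 0 < u := one_pos.trans hu.1
      rw [Real.norm_eq_abs, ← sub_div, abs_div, abs_of_pos hu0]
      calc |(1 - u * exp (θ * I)).arg - (θ - π)| / u ≤ 1 / (δ * u) / u := by
            gcongr; exact abs_arg_one_sub_mul_exp_sub_le h0 h2 hu.1.le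
        _ = 1 / δ * (1 / u ^ 2) := by ring
    calc |∫ u in (1:ℝ)..R, (h u - (θ - π) / u)|
        ≤ ∫ u in (1:ℝ)..R, 1 / δ * (1 / u ^ 2) :=
          intervalIntegral.norm_integral_le_of_norm_le hR (ae_of_all _ hpt) hsq
      _ = 1 / δ * (1 - R⁻¹) := by
          rw [intervalIntegral.integral_const_mul,
            integral_one_div_sq fun h0 => (hpos 0 h0).false, inv_one]
      _ ≤ 1 / δ := mul_le_of_le_one_right (by positivity) (by
          have := inv_pos.2 (one_pos.trans_le hR); linarith)
  calc |(∫ u in (0:ℝ)..R, h u) - (θ - π) * Real.log R|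
      = |(∫ u in (0:ℝ)..1, h u) + ∫ u in (1:ℝ)..R, (h u - (θ - π) / u)| := by
        rw [← intervalIntegral.integral_add_adjacent_intervals h01 h1R,
          intervalIntegral.integral_sub h1R hinv, hlog, add_sub_assoc]
    _ ≤ |∫ u in (0:ℝ)..1, h u| + |∫ u in (1:ℝ)..R, (h u - (θ - π) / u)| := abs_add_le _ _
    _ ≤ 1 / δ + 1 / δ :=
        add_le_add (abs_integral_arg_one_sub_mul_exp_div_le hθ zero_le_one le_rfl) herr
    _ = 2 / δ := by ring

lemma re_div_two_pi_I (w : ℂ) : (w / (2 * π * I)).re = w.im / (2 * π) := by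
  simp [div_re, normSq]
  field_simp

lemma exp_two_pi_I_mul_add_mul_I (t X : ℝ) :
    exp (2 * π * I * (t + X * I)) = (Real.exp (-(2 * π * X)) : ℝ) * exp ((2 * π * t : ℝ) * I) := by
  rw [ofReal_exp, ← exp_add]
  congr 1
  push_cast
  ring_nf
  rw [I_sq]
  ring

end Complex

lemma dilog_ofReal_mul (z : ℂ) {R : ℝ} (hR : R ≠ 0) :
    dilog (R * z) = -∫ u in (0:ℝ)..R, log (1 - u * z) / u := by
  have hfun : (fun s : ℝ => log (1 - s * (R * z)) / s)
      = fun s : ℝ => R • (log (1 - ↑(R * s) * z) / ↑(R * s)) := by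
    funext s
    rcases eq_or_ne s 0 with rfl | hs
    · simp
    · have hR' : (R : ℂ) ≠ 0 := ofReal_ne_zero.2 hR
      rw [real_smul]
      push_cast
      field_simp
  rw [dilog, hfun, intervalIntegral.integral_smul,
    intervalIntegral.smul_integral_comp_mul_left (fun u : ℝ => log (1 - u * z) / u) R,
    mul_zero, mul_one]

lemma im_dilog_ofReal_mul_exp {θ R : ℝ} (hθ : Real.cos θ < 1) (hR : 0 < R) :
    (dilog (R * exp (θ * I))).im = -∫ u in (0:ℝ)..R, (1 - u * exp (θ * I)).arg / u := by
  rw [dilog_ofReal_mul _ hR.ne', neg_im, ← imCLM_apply,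
    ← imCLM.intervalIntegral_comp_comm (intervalIntegrable_log_one_sub_mul_exp_div hθ hR.le)]
  simp [log_im]

/-- For `0 < t < 1`, there is `C > 0` with
`|Re(Li₂(e^{2πi(t+Xi)})/(2πi)) - (0 if X ≥ 0, else 2π(t-1/2)X)| < C` for all real `X`. -/
theorem re_dilog_estimate (t : ℝ) (ht0 : 0 < t) (ht1 : t < 1) :
    ∃ C : ℝ, 0 < C ∧ ∀ X : ℝ,
      |(dilog (Complex.exp (2 * Real.pi * Complex.I * ((t:ℂ) + (X:ℂ) * Complex.I))) /
          (2 * Real.pi * Complex.I)).re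
        - (if 0 ≤ X then 0 else 2 * Real.pi * (t - 1/2) * X)| < C := by
  set θ := 2 * π * t
  have h0 : 0 < θ := by positivity
  have h2 : θ < 2 * π := by nlinarith [Real.pi_pos]
  have hcos := Real.cos_lt_one_of_pos_of_lt_two_pi h0 h2
  set δ := min 1 (1 - Real.cos θ)
  have hδ : 0 < δ := lt_min one_pos (by linarith)
  refine ⟨2 / δ, by positivity, fun X => ?_⟩
  set R := Real.exp (-(2 * π * X))
  rw [exp_two_pi_I_mul_add_mul_I, re_div_two_pi_I, im_dilog_ofReal_mul_exp hcos (Real.exp_pos _)]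
  set J := ∫ u in (0:ℝ)..R, (1 - u * exp (θ * I)).arg / u
  have heq : -J / (2 * π) - (if 0 ≤ X then 0 else 2 * π * (t - 1/2) * X)
      = -(J - if 0 ≤ X then 0 else (θ - π) * Real.log R) / (2 * π) := by
    split_ifs
    · ring
    · rw [Real.log_exp]; field_simp; ring
  have hJ : |J - if 0 ≤ X then 0 else (θ - π) * Real.log R| ≤ 2 / δ := by
    split_ifs with hX
    · rw [sub_zero]
      refine (abs_integral_arg_one_sub_mul_exp_div_le hcos (Real.exp_pos _).le
        (Real.exp_le_one_iff.2 (by nlinarith [Real.pi_pos]))).trans ?_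
      gcongr; norm_num
    · exact abs_integral_arg_one_sub_mul_exp_div_sub_le h0 h2
        (Real.one_le_exp_iff.2 (by nlinarith [Real.pi_pos]))
  rw [heq, abs_div, abs_neg, abs_of_pos Real.two_pi_pos]
  calc |J - if 0 ≤ X then 0 else (θ - π) * Real.log R| / (2 * π) ≤ 2 / δ / (2 * π) := by gcongr
    _ < 2 / δ := div_lt_self (by positivity) (by linarith [Real.pi_gt_three])
end

section
/- Let f(t,X,s,Y) be a smooth real function and suppose X(t,s), Y(t,s) solve f_X = f_Y = 0 along (t,X(t,s),s,Y(t,s)), with the 2×2 matrix (f_{XX}, f_{XY}; f_{XY}, f_{YY}) nonsingular. Let h(t,s) = f(t,X(t,s),s,Y(t,s)). Then h_{tt}·h_{ss} - h_{ts}² equals the determinant of the full 4×4 Hessian of f divided by the determinant of the 2×2 matrix (f_{XX}, f_{XY}; f_{XY}, f_{YY}), all evaluated at (t,X(t,s),s,Y(t,s)). -/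
open Matrix

/-- Partial derivative operators in the variables `t`, `X`, `s`, `Y` (in that argument order). -/
noncomputable def pdv : Fin 4 → (ℝ → ℝ → ℝ → ℝ → ℝ) → (ℝ → ℝ → ℝ → ℝ → ℝ) :=
  ![fun f t X s Y => deriv (fun u => f u X s Y) t,
    fun f t X s Y => deriv (fun u => f t u s Y) X,
    fun f t X s Y => deriv (fun u => f t X u Y) s,
    fun f t X s Y => deriv (fun u => f t X s u) Y]

/-- The full `4×4` Hessian of `f` with respect to `(t,s,X,Y)`. -/
noncomputable def hessMat (f : ℝ → ℝ → ℝ → ℝ → ℝ) (t X s Y : ℝ) :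
    Matrix (Fin 4) (Fin 4) ℝ :=
  Matrix.of fun i j =>
    pdv ((![0, 2, 1, 3] : Fin 4 → Fin 4) i) (pdv ((![0, 2, 1, 3] : Fin 4 → Fin 4) j) f) t X s Y

/-- The `2×2` matrix `Δ = (f_XX, f_XY; f_XY, f_YY)`. -/
noncomputable def deltaMat (f : ℝ → ℝ → ℝ → ℝ → ℝ) (t X s Y : ℝ) :
    Matrix (Fin 2) (Fin 2) ℝ :=
  !![pdv 1 (pdv 1 f) t X s Y, pdv 1 (pdv 3 f) t X s Y;
     pdv 3 (pdv 1 f) t X s Y, pdv 3 (pdv 3 f) t X s Y]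

noncomputable def e4 : Fin 4 → ℝ × ℝ × ℝ × ℝ := ![(1,0,0,0),(0,1,0,0),(0,0,1,0),(0,0,0,1)]

lemma clm_expand (L : (ℝ×ℝ×ℝ×ℝ) →L[ℝ] ℝ) (a b c d : ℝ) :
    L (a, b, c, d) = a * L (e4 0) + b * L (e4 1) + c * L (e4 2) + d * L (e4 3) := by
  have h : (a,b,c,d) = a • e4 0 + b • e4 1 + c • e4 2 + d • e4 3 := by
    simp [e4, Prod.ext_iff]
  rw [h]
  simp [map_add, _root_.map_smul, smul_eq_mul]

lemma pdv_apply_fderiv (G : ℝ × ℝ × ℝ × ℝ → ℝ) {t X s Y : ℝ}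
    (hG : DifferentiableAt ℝ G (t, X, s, Y)) (i : Fin 4) :
    pdv i (fun t X s Y => G (t, X, s, Y)) t X s Y = fderiv ℝ G (t, X, s, Y) (e4 i) := by
  fin_cases i
  · show deriv (fun u => G (u, X, s, Y)) t = fderiv ℝ G (t, X, s, Y) (e4 0)
    have hc : HasDerivAt (fun u : ℝ => ((u, X, s, Y) : ℝ×ℝ×ℝ×ℝ)) (1, 0, 0, 0) t :=
      (hasDerivAt_id t).prodMk ((hasDerivAt_const t X).prodMk
        ((hasDerivAt_const t s).prodMk (hasDerivAt_const t Y)))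
    simp only [e4, Matrix.cons_val_zero]
    exact (hG.hasFDerivAt.comp_hasDerivAt t hc).deriv
  · show deriv (fun u => G (t, u, s, Y)) X = fderiv ℝ G (t, X, s, Y) (e4 1)
    have hc : HasDerivAt (fun u : ℝ => ((t, u, s, Y) : ℝ×ℝ×ℝ×ℝ)) (0, 1, 0, 0) X :=
      (hasDerivAt_const X t).prodMk ((hasDerivAt_id X).prodMk
        ((hasDerivAt_const X s).prodMk (hasDerivAt_const X Y)))
    simp only [e4, Matrix.cons_val_one, Matrix.head_cons]
    exact (hG.hasFDerivAt.comp_hasDerivAt X hc).deriv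
  · show deriv (fun u => G (t, X, u, Y)) s = fderiv ℝ G (t, X, s, Y) (e4 2)
    have hc : HasDerivAt (fun u : ℝ => ((t, X, u, Y) : ℝ×ℝ×ℝ×ℝ)) (0, 0, 1, 0) s :=
      (hasDerivAt_const s t).prodMk ((hasDerivAt_const s X).prodMk
        ((hasDerivAt_id s).prodMk (hasDerivAt_const s Y)))
    have h2 : e4 2 = ((0:ℝ),(0:ℝ),(1:ℝ),(0:ℝ)) := by simp [e4]
    rw [h2]
    exact (hG.hasFDerivAt.comp_hasDerivAt s hc).deriv
  · show deriv (fun u => G (t, X, s, u)) Y = fderiv ℝ G (t, X, s, Y) (e4 3)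
    have hc : HasDerivAt (fun u : ℝ => ((t, X, s, u) : ℝ×ℝ×ℝ×ℝ)) (0, 0, 0, 1) Y :=
      (hasDerivAt_const Y t).prodMk ((hasDerivAt_const Y X).prodMk
        ((hasDerivAt_const Y s).prodMk (hasDerivAt_id Y)))
    have h3 : e4 3 = ((0:ℝ),(0:ℝ),(0:ℝ),(1:ℝ)) := by simp [e4]
    rw [h3]
    exact (hG.hasFDerivAt.comp_hasDerivAt Y hc).deriv

lemma deriv_along (G : ℝ×ℝ×ℝ×ℝ → ℝ) (hG : Differentiable ℝ G)
    {a b c d : ℝ → ℝ} {a' b' c' d' u : ℝ}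
    (ha : HasDerivAt a a' u) (hb : HasDerivAt b b' u)
    (hc : HasDerivAt c c' u) (hd : HasDerivAt d d' u) :
    HasDerivAt (fun v => G (a v, b v, c v, d v))
      (fderiv ℝ G (a u, b u, c u, d u) (a', b', c', d')) u :=
  (hG _).hasFDerivAt.comp_hasDerivAt u (ha.prodMk (hb.prodMk (hc.prodMk hd)))

lemma det_fin_four' (M : Matrix (Fin 4) (Fin 4) ℝ) : M.det =
    M 0 0 * (M 1 1 * (M 2 2 * M 3 3 - M 2 3 * M 3 2)
      - M 1 2 * (M 2 1 * M 3 3 - M 2 3 * M 3 1)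
      + M 1 3 * (M 2 1 * M 3 2 - M 2 2 * M 3 1))
    - M 0 1 * (M 1 0 * (M 2 2 * M 3 3 - M 2 3 * M 3 2)
      - M 1 2 * (M 2 0 * M 3 3 - M 2 3 * M 3 0)
      + M 1 3 * (M 2 0 * M 3 2 - M 2 2 * M 3 0))
    + M 0 2 * (M 1 0 * (M 2 1 * M 3 3 - M 2 3 * M 3 1)
      - M 1 1 * (M 2 0 * M 3 3 - M 2 3 * M 3 0)
      + M 1 3 * (M 2 0 * M 3 1 - M 2 1 * M 3 0))
    - M 0 3 * (M 1 0 * (M 2 1 * M 3 2 - M 2 2 * M 3 1)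
      - M 1 1 * (M 2 0 * M 3 2 - M 2 2 * M 3 0)
      + M 1 2 * (M 2 0 * M 3 1 - M 2 1 * M 3 0)) := by
  simp [Matrix.det_succ_row_zero, Fin.sum_univ_succ]
  norm_num [show ((2:Fin 3).succ : Fin 4) = 3 from rfl,
    show (Fin.succAbove 2 2 : Fin 4) = 3 from rfl,
    show (Fin.succAbove 1 2 : Fin 4) = 3 from rfl,
    show (Fin.castSucc 2 : Fin 4) = 2 from rfl,
    show (Fin.succAbove 3 2 : Fin 4) = 2 from rfl]
  ring

/-- For smooth `f` and implicit solutions `X(t,s)`, `Y(t,s)` of `f_X = f_Y = 0` with `Δ`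
nonsingular, setting `h(t,s) = f(t,X(t,s),s,Y(t,s))`, one has
`h_tt h_ss - h_ts² = det Hess(f) / det Δ` at the corresponding point. -/
theorem h_hessian_quotient (f : ℝ → ℝ → ℝ → ℝ → ℝ) (Xf Yf : ℝ → ℝ → ℝ)
    (hf : ContDiff ℝ (⊤ : ℕ∞) fun p : ℝ × ℝ × ℝ × ℝ => f p.1 p.2.1 p.2.2.1 p.2.2.2)
    (hXf : ContDiff ℝ (⊤ : ℕ∞) fun p : ℝ × ℝ => Xf p.1 p.2)
    (hYf : ContDiff ℝ (⊤ : ℕ∞) fun p : ℝ × ℝ => Yf p.1 p.2)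
    (hfX : ∀ t s : ℝ, pdv 1 f t (Xf t s) s (Yf t s) = 0)
    (hfY : ∀ t s : ℝ, pdv 3 f t (Xf t s) s (Yf t s) = 0)
    (hΔ : ∀ t s : ℝ, (deltaMat f t (Xf t s) s (Yf t s)).det ≠ 0)
    (t₀ s₀ : ℝ) :
    deriv (fun a : ℝ => deriv (fun b : ℝ => f b (Xf b s₀) s₀ (Yf b s₀)) a) t₀ *
        deriv (fun a : ℝ => deriv (fun b : ℝ => f t₀ (Xf t₀ b) b (Yf t₀ b)) a) s₀ -
      (deriv (fun a : ℝ => deriv (fun b : ℝ => f b (Xf b a) a (Yf b a)) t₀) s₀) ^ 2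
      = (hessMat f t₀ (Xf t₀ s₀) s₀ (Yf t₀ s₀)).det /
          (deltaMat f t₀ (Xf t₀ s₀) s₀ (Yf t₀ s₀)).det := by
  have hF : ContDiff ℝ (⊤ : ℕ∞) (fun p : ℝ × ℝ × ℝ × ℝ => f p.1 p.2.1 p.2.2.1 p.2.2.2) := hf
  set F : ℝ×ℝ×ℝ×ℝ → ℝ := fun p => f p.1 p.2.1 p.2.2.1 p.2.2.2 with hFdef
  have hFd : Differentiable ℝ F := hF.differentiable (by simp)
  have hF1 : ContDiff ℝ (⊤ : ℕ∞) (fderiv ℝ F) := hF.fderiv_right (by simp)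
  have hGsm : ∀ i : Fin 4, ContDiff ℝ (⊤ : ℕ∞) (fun p => fderiv ℝ F p (e4 i)) := fun i =>
    (ContinuousLinearMap.apply ℝ ℝ (e4 i)).contDiff.comp hF1
  have hGd : ∀ i : Fin 4, Differentiable ℝ (fun p => fderiv ℝ F p (e4 i)) := fun i =>
    (hGsm i).differentiable (by simp)
  -- first partials
  have hpdv : ∀ (i : Fin 4) (t X s Y : ℝ),
      pdv i f t X s Y = fderiv ℝ F (t, X, s, Y) (e4 i) := fun i t X s Y =>
    pdv_apply_fderiv F (hFd _) i
  -- derivative of the directional-derivative function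
  have hsnd : ∀ (j : Fin 4) (p : ℝ×ℝ×ℝ×ℝ),
      fderiv ℝ (fun q => fderiv ℝ F q (e4 j)) p
        = (ContinuousLinearMap.apply ℝ ℝ (e4 j)).comp (fderiv ℝ (fderiv ℝ F) p) := by
    intro j p
    have h1 : HasFDerivAt (fderiv ℝ F) (fderiv ℝ (fderiv ℝ F) p) p :=
      ((hF1.differentiable (by simp)) p).hasFDerivAt
    exact ((ContinuousLinearMap.apply ℝ ℝ (e4 j)).hasFDerivAt.comp p h1).fderiv
  have hsnd' : ∀ (j : Fin 4) (p : ℝ×ℝ×ℝ×ℝ) (v : ℝ×ℝ×ℝ×ℝ),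
      fderiv ℝ (fun q => fderiv ℝ F q (e4 j)) p v
        = fderiv ℝ (fderiv ℝ F) p v (e4 j) := by
    intro j p v; rw [hsnd]; rfl
  -- second partials
  have hpdv2 : ∀ (i j : Fin 4) (t X s Y : ℝ),
      pdv i (pdv j f) t X s Y = fderiv ℝ (fderiv ℝ F) (t, X, s, Y) (e4 i) (e4 j) := by
    intro i j t X s Y
    have hfun : pdv j f = fun t X s Y => fderiv ℝ F (t, X, s, Y) (e4 j) := by
      funext a b c d; exact hpdv j a b c d
    rw [hfun, pdv_apply_fderiv _ ((hGd j) _) i, hsnd']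
  -- symmetry of second derivative
  have hsymm : ∀ (p v w : ℝ×ℝ×ℝ×ℝ),
      fderiv ℝ (fderiv ℝ F) p v w = fderiv ℝ (fderiv ℝ F) p w v := fun p v w =>
    (hF.contDiffAt.isSymmSndFDerivAt (by rw [minSmoothness_of_isRCLikeNormedField]; exact WithTop.coe_le_coe.mpr (le_top : (2:ℕ∞) ≤ ⊤)) ) v w
  -- differentiability of slices of Xf, Yf
  have hXd1 : ∀ s : ℝ, Differentiable ℝ (fun b => Xf b s) := fun s =>
    (hXf.differentiable (by simp)).comp (differentiable_id.prodMk (differentiable_const s))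
  have hXd2 : ∀ t : ℝ, Differentiable ℝ (fun b => Xf t b) := fun t =>
    (hXf.differentiable (by simp)).comp ((differentiable_const t).prodMk differentiable_id)
  have hYd1 : ∀ s : ℝ, Differentiable ℝ (fun b => Yf b s) := fun s =>
    (hYf.differentiable (by simp)).comp (differentiable_id.prodMk (differentiable_const s))
  have hYd2 : ∀ t : ℝ, Differentiable ℝ (fun b => Yf t b) := fun t =>
    (hYf.differentiable (by simp)).comp ((differentiable_const t).prodMk differentiable_id)
  -- vanishing of f_X, f_Y along the path
  have hz1 : ∀ t s : ℝ, fderiv ℝ F (t, Xf t s, s, Yf t s) (e4 1) = 0 := fun t s =>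
    (hpdv 1 t (Xf t s) s (Yf t s)).symm.trans (hfX t s)
  have hz3 : ∀ t s : ℝ, fderiv ℝ F (t, Xf t s, s, Yf t s) (e4 3) = 0 := fun t s =>
    (hpdv 3 t (Xf t s) s (Yf t s)).symm.trans (hfY t s)
  -- first derivative of h in t equals f_t along the path (for all t s)
  have claim_t : ∀ t s : ℝ, deriv (fun b => f b (Xf b s) s (Yf b s)) t
      = fderiv ℝ F (t, Xf t s, s, Yf t s) (e4 0) := by
    intro t s
    have hD := deriv_along F hFd (hasDerivAt_id t) ((hXd1 s) t).hasDerivAt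
      (hasDerivAt_const t s) ((hYd1 s) t).hasDerivAt
    have hd : deriv (fun b => f b (Xf b s) s (Yf b s)) t
        = fderiv ℝ F (t, Xf t s, s, Yf t s)
            (1, deriv (fun b => Xf b s) t, 0, deriv (fun b => Yf b s) t) := hD.deriv
    rw [hd, clm_expand, hz1, hz3]; ring
  have claim_s : ∀ t s : ℝ, deriv (fun b => f t (Xf t b) b (Yf t b)) s
      = fderiv ℝ F (t, Xf t s, s, Yf t s) (e4 2) := by
    intro t s
    have hD := deriv_along F hFd (hasDerivAt_const s t) ((hXd2 t) s).hasDerivAt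
      (hasDerivAt_id s) ((hYd2 t) s).hasDerivAt
    have hd : deriv (fun b => f t (Xf t b) b (Yf t b)) s
        = fderiv ℝ F (t, Xf t s, s, Yf t s)
            (0, deriv (fun b => Xf t b) s, 1, deriv (fun b => Yf t b) s) := hD.deriv
    rw [hd, clm_expand, hz1, hz3]; ring
  -- abbreviations at the base point
  set Xt := deriv (fun b => Xf b s₀) t₀ with hXt
  set Yt := deriv (fun b => Yf b s₀) t₀ with hYt
  set Xs := deriv (fun b => Xf t₀ b) s₀ with hXs
  set Ys := deriv (fun b => Yf t₀ b) s₀ with hYs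
  have hHsymm : ∀ i j : Fin 4,
      fderiv ℝ (fderiv ℝ F) (t₀, Xf t₀ s₀, s₀, Yf t₀ s₀) (e4 i) (e4 j)
      = fderiv ℝ (fderiv ℝ F) (t₀, Xf t₀ s₀, s₀, Yf t₀ s₀) (e4 j) (e4 i) := fun i j =>
    hsymm _ _ _
  -- second derivatives of h
  have L1 : deriv (fun a : ℝ => deriv (fun b : ℝ => f b (Xf b s₀) s₀ (Yf b s₀)) a) t₀
      = fderiv ℝ (fderiv ℝ F) (t₀, Xf t₀ s₀, s₀, Yf t₀ s₀) (e4 0) (e4 0)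
        + Xt * fderiv ℝ (fderiv ℝ F) (t₀, Xf t₀ s₀, s₀, Yf t₀ s₀) (e4 1) (e4 0)
        + Yt * fderiv ℝ (fderiv ℝ F) (t₀, Xf t₀ s₀, s₀, Yf t₀ s₀) (e4 3) (e4 0) := by
    have hfun : (fun a : ℝ => deriv (fun b : ℝ => f b (Xf b s₀) s₀ (Yf b s₀)) a)
        = fun a : ℝ => (fun q => fderiv ℝ F q (e4 0)) (a, Xf a s₀, s₀, Yf a s₀) := by
      funext a; exact claim_t a s₀
    rw [hfun]
    have hD := deriv_along _ (hGd 0) (hasDerivAt_id t₀) ((hXd1 s₀) t₀).hasDerivAt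
      (hasDerivAt_const t₀ s₀) ((hYd1 s₀) t₀).hasDerivAt
    have hdv : deriv (fun a : ℝ => (fun q => fderiv ℝ F q (e4 0)) (a, Xf a s₀, s₀, Yf a s₀)) t₀
        = fderiv ℝ (fun q => fderiv ℝ F q (e4 0)) (t₀, Xf t₀ s₀, s₀, Yf t₀ s₀)
            (1, Xt, 0, Yt) := hD.deriv
    rw [hdv, clm_expand, hsnd', hsnd', hsnd', hsnd']
    ring
  have L2 : deriv (fun a : ℝ => deriv (fun b : ℝ => f t₀ (Xf t₀ b) b (Yf t₀ b)) a) s₀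
      = fderiv ℝ (fderiv ℝ F) (t₀, Xf t₀ s₀, s₀, Yf t₀ s₀) (e4 2) (e4 2)
        + Xs * fderiv ℝ (fderiv ℝ F) (t₀, Xf t₀ s₀, s₀, Yf t₀ s₀) (e4 1) (e4 2)
        + Ys * fderiv ℝ (fderiv ℝ F) (t₀, Xf t₀ s₀, s₀, Yf t₀ s₀) (e4 3) (e4 2) := by
    have hfun : (fun a : ℝ => deriv (fun b : ℝ => f t₀ (Xf t₀ b) b (Yf t₀ b)) a)
        = fun a : ℝ => (fun q => fderiv ℝ F q (e4 2)) (t₀, Xf t₀ a, a, Yf t₀ a) := by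
      funext a; exact claim_s t₀ a
    rw [hfun]
    have hD := deriv_along _ (hGd 2) (hasDerivAt_const s₀ t₀) ((hXd2 t₀) s₀).hasDerivAt
      (hasDerivAt_id s₀) ((hYd2 t₀) s₀).hasDerivAt
    have hdv : deriv (fun a : ℝ => (fun q => fderiv ℝ F q (e4 2)) (t₀, Xf t₀ a, a, Yf t₀ a)) s₀
        = fderiv ℝ (fun q => fderiv ℝ F q (e4 2)) (t₀, Xf t₀ s₀, s₀, Yf t₀ s₀)
            (0, Xs, 1, Ys) := hD.deriv
    rw [hdv, clm_expand, hsnd', hsnd', hsnd', hsnd']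
    ring
  have L3 : deriv (fun a : ℝ => deriv (fun b : ℝ => f b (Xf b a) a (Yf b a)) t₀) s₀
      = fderiv ℝ (fderiv ℝ F) (t₀, Xf t₀ s₀, s₀, Yf t₀ s₀) (e4 2) (e4 0)
        + Xs * fderiv ℝ (fderiv ℝ F) (t₀, Xf t₀ s₀, s₀, Yf t₀ s₀) (e4 1) (e4 0)
        + Ys * fderiv ℝ (fderiv ℝ F) (t₀, Xf t₀ s₀, s₀, Yf t₀ s₀) (e4 3) (e4 0) := by
    have hfun : (fun a : ℝ => deriv (fun b : ℝ => f b (Xf b a) a (Yf b a)) t₀)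
        = fun a : ℝ => (fun q => fderiv ℝ F q (e4 0)) (t₀, Xf t₀ a, a, Yf t₀ a) := by
      funext a; exact claim_t t₀ a
    rw [hfun]
    have hD := deriv_along _ (hGd 0) (hasDerivAt_const s₀ t₀) ((hXd2 t₀) s₀).hasDerivAt
      (hasDerivAt_id s₀) ((hYd2 t₀) s₀).hasDerivAt
    have hdv : deriv (fun a : ℝ => (fun q => fderiv ℝ F q (e4 0)) (t₀, Xf t₀ a, a, Yf t₀ a)) s₀
        = fderiv ℝ (fun q => fderiv ℝ F q (e4 0)) (t₀, Xf t₀ s₀, s₀, Yf t₀ s₀)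
            (0, Xs, 1, Ys) := hD.deriv
    rw [hdv, clm_expand, hsnd', hsnd', hsnd', hsnd']
    ring
  -- differentiated constraints
  have constr : ∀ j : Fin 4, (∀ t s : ℝ, fderiv ℝ F (t, Xf t s, s, Yf t s) (e4 j) = 0) →
      (fderiv ℝ (fderiv ℝ F) (t₀, Xf t₀ s₀, s₀, Yf t₀ s₀) (e4 0) (e4 j)
        + Xt * fderiv ℝ (fderiv ℝ F) (t₀, Xf t₀ s₀, s₀, Yf t₀ s₀) (e4 1) (e4 j)
        + Yt * fderiv ℝ (fderiv ℝ F) (t₀, Xf t₀ s₀, s₀, Yf t₀ s₀) (e4 3) (e4 j) = 0)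
      ∧ (fderiv ℝ (fderiv ℝ F) (t₀, Xf t₀ s₀, s₀, Yf t₀ s₀) (e4 2) (e4 j)
        + Xs * fderiv ℝ (fderiv ℝ F) (t₀, Xf t₀ s₀, s₀, Yf t₀ s₀) (e4 1) (e4 j)
        + Ys * fderiv ℝ (fderiv ℝ F) (t₀, Xf t₀ s₀, s₀, Yf t₀ s₀) (e4 3) (e4 j) = 0) := by
    intro j hj
    constructor
    · have hD := deriv_along _ (hGd j) (hasDerivAt_id t₀) ((hXd1 s₀) t₀).hasDerivAt
        (hasDerivAt_const t₀ s₀) ((hYd1 s₀) t₀).hasDerivAt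
      have h0 : (fun b : ℝ => (fun q => fderiv ℝ F q (e4 j)) (b, Xf b s₀, s₀, Yf b s₀))
          = fun _ : ℝ => (0:ℝ) := by funext b; exact hj b s₀
      have hdv : deriv (fun b : ℝ => (fun q => fderiv ℝ F q (e4 j)) (b, Xf b s₀, s₀, Yf b s₀)) t₀
          = fderiv ℝ (fun q => fderiv ℝ F q (e4 j)) (t₀, Xf t₀ s₀, s₀, Yf t₀ s₀)
              (1, Xt, 0, Yt) := hD.deriv
      rw [h0, deriv_const] at hdv
      rw [clm_expand, hsnd', hsnd', hsnd', hsnd'] at hdv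
      linarith [hdv]
    · have hD := deriv_along _ (hGd j) (hasDerivAt_const s₀ t₀) ((hXd2 t₀) s₀).hasDerivAt
        (hasDerivAt_id s₀) ((hYd2 t₀) s₀).hasDerivAt
      have h0 : (fun b : ℝ => (fun q => fderiv ℝ F q (e4 j)) (t₀, Xf t₀ b, b, Yf t₀ b))
          = fun _ : ℝ => (0:ℝ) := by funext b; exact hj t₀ b
      have hdv : deriv (fun b : ℝ => (fun q => fderiv ℝ F q (e4 j)) (t₀, Xf t₀ b, b, Yf t₀ b)) s₀
          = fderiv ℝ (fun q => fderiv ℝ F q (e4 j)) (t₀, Xf t₀ s₀, s₀, Yf t₀ s₀)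
              (0, Xs, 1, Ys) := hD.deriv
      rw [h0, deriv_const] at hdv
      rw [clm_expand, hsnd', hsnd', hsnd', hsnd'] at hdv
      linarith [hdv]
  obtain ⟨C1t, C1s⟩ := constr 1 hz1
  obtain ⟨C3t, C3s⟩ := constr 3 hz3
  -- determinant expansion
  have hdet : (deltaMat f t₀ (Xf t₀ s₀) s₀ (Yf t₀ s₀)).det ≠ 0 := hΔ t₀ s₀
  rw [eq_div_iff hdet, L1, L2, L3, det_fin_four', Matrix.det_fin_two]
  simp only [hessMat, deltaMat, Matrix.of_apply, Matrix.cons_val', Matrix.cons_val_zero,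
    Matrix.cons_val_one, Matrix.head_cons, Matrix.empty_val', Matrix.cons_val_fin_one,
    Matrix.head_fin_const, Matrix.cons_val_two, Matrix.tail_cons, Matrix.cons_val_three,
    Matrix.head_fin_const]
  simp only [hpdv2]
  -- canonicalize symmetric pairs
  rw [hHsymm 1 0, hHsymm 2 0, hHsymm 3 0, hHsymm 2 1, hHsymm 3 1, hHsymm 3 2]
  rw [hHsymm 3 1] at C1t C1s
  rw [hHsymm 2 1] at C1s
  have E01 : fderiv ℝ (fderiv ℝ F) (t₀, Xf t₀ s₀, s₀, Yf t₀ s₀) (e4 0) (e4 1) = -(Xt * (fderiv ℝ (fderiv ℝ F) (t₀, Xf t₀ s₀, s₀, Yf t₀ s₀) (e4 1) (e4 1)) + Yt * (fderiv ℝ (fderiv ℝ F) (t₀, Xf t₀ s₀, s₀, Yf t₀ s₀) (e4 1) (e4 3))) := by linarith [C1t]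
  have E03 : fderiv ℝ (fderiv ℝ F) (t₀, Xf t₀ s₀, s₀, Yf t₀ s₀) (e4 0) (e4 3) = -(Xt * (fderiv ℝ (fderiv ℝ F) (t₀, Xf t₀ s₀, s₀, Yf t₀ s₀) (e4 1) (e4 3)) + Yt * (fderiv ℝ (fderiv ℝ F) (t₀, Xf t₀ s₀, s₀, Yf t₀ s₀) (e4 3) (e4 3))) := by linarith [C3t]
  have E12 : fderiv ℝ (fderiv ℝ F) (t₀, Xf t₀ s₀, s₀, Yf t₀ s₀) (e4 1) (e4 2) = -(Xs * (fderiv ℝ (fderiv ℝ F) (t₀, Xf t₀ s₀, s₀, Yf t₀ s₀) (e4 1) (e4 1)) + Ys * (fderiv ℝ (fderiv ℝ F) (t₀, Xf t₀ s₀, s₀, Yf t₀ s₀) (e4 1) (e4 3))) := by linarith [C1s]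
  have E23 : fderiv ℝ (fderiv ℝ F) (t₀, Xf t₀ s₀, s₀, Yf t₀ s₀) (e4 2) (e4 3) = -(Xs * (fderiv ℝ (fderiv ℝ F) (t₀, Xf t₀ s₀, s₀, Yf t₀ s₀) (e4 1) (e4 3)) + Ys * (fderiv ℝ (fderiv ℝ F) (t₀, Xf t₀ s₀, s₀, Yf t₀ s₀) (e4 3) (e4 3))) := by linarith [C3s]
  rw [E01, E03, E12, E23]
  ring
end

section
/- For real numbers t, s, X, Y with 1/2 < t < 1, 1 < t+s < 3/2, and 0 < t-s < 1/2, setting x = e^{2πi(t+iX)} and y = e^{2πi(s+iY)}, the real 2×2 matrix 2π·(3a+b+c, b-c; b-c, b+c) is positive definite, where a = -Im(1/(1-x)), b = Im(1/(1-xy)), c = Im(1/(1-x/y)). -/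
open Complex Matrix

/-- `x = e^{2πi(t+iX)}`. -/
noncomputable def zz (t X : ℝ) : ℂ :=
  Complex.exp (2 * Real.pi * Complex.I * ((t:ℂ) + (X:ℂ) * Complex.I))

/-- `a = -Im(1/(1-x))`. -/
noncomputable def aa (t X : ℝ) : ℝ := -(((1 : ℂ) - zz t X)⁻¹).im

/-- `b = Im(1/(1-xy))`. -/
noncomputable def bb (t s X Y : ℝ) : ℝ := (((1 : ℂ) - zz t X * zz s Y)⁻¹).im

/-- `c = Im(1/(1-x/y))`. -/
noncomputable def cc (t s X Y : ℝ) : ℝ := (((1 : ℂ) - zz t X / zz s Y)⁻¹).im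

/-!
Since `Im (1/(1-z)) = Im z / |1-z|²` and `Im x = e^{-2πX} sin 2πt`, the hypotheses on `t`,
`t + s` and `t - s` make `a`, `b` and `c` positive. The matrix
`(a' + b + c, b - c; b - c, b + c)` with `a' = 3a` has positive corner entry and determinant
`a'(b + c) + 4bc > 0`, so it is positive definite.
-/

theorem Matrix.posDef_fin_two_of_pos_of_det_pos {p q r : ℝ} (hp : 0 < p)
    (hdet : 0 < p * r - q ^ 2) : (!![p, q; q, r] : Matrix (Fin 2) (Fin 2) ℝ).PosDef := by
  rw [posDef_iff_dotProduct_mulVec]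
  refine ⟨by ext i j; fin_cases i <;> fin_cases j <;> rfl, fun v hv => ?_⟩
  simp only [star_trivial, dotProduct, mulVec, Fin.sum_univ_two, of_apply, cons_val_zero,
    cons_val_one]
  -- `p * Q(v) = (p v₀ + q v₁)² + (p r - q²) v₁²`
  by_cases hv₁ : v 1 = 0
  · have hv₀ : v 0 ≠ 0 := fun hv₀ => hv (by ext i; fin_cases i <;> assumption)
    rw [hv₁]
    nlinarith [sq_pos_of_ne_zero hv₀]
  · have := mul_pos hdet (sq_pos_of_ne_zero hv₁)
    have key : 0 < p * (v 0 * (p * v 0 + q * v 1) + v 1 * (q * v 0 + r * v 1)) := by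
      nlinarith [sq_nonneg (p * v 0 + q * v 1)]
    exact pos_of_mul_pos_right key hp.le

theorem Matrix.posDef_add_add_sub {a b c : ℝ} (ha : 0 < a) (hb : 0 < b) (hc : 0 < c) :
    (!![a + b + c, b - c; b - c, b + c] : Matrix (Fin 2) (Fin 2) ℝ).PosDef :=
  posDef_fin_two_of_pos_of_det_pos (by linarith) (by nlinarith [mul_pos ha hb, mul_pos hb hc])

namespace Complex

theorem im_inv_one_sub (z : ℂ) : ((1 - z)⁻¹).im = z.im / normSq (1 - z) := by
  simp [inv_im]

theorem normSq_one_sub_pos_of_im_ne_zero {z : ℂ} (hz : z.im ≠ 0) : 0 < normSq (1 - z) :=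
  normSq_pos.mpr fun h => hz (by simp [← sub_eq_zero.mp h])

theorem im_inv_one_sub_pos {z : ℂ} (hz : 0 < z.im) : 0 < ((1 - z)⁻¹).im := by
  rw [im_inv_one_sub]
  exact div_pos hz (normSq_one_sub_pos_of_im_ne_zero hz.ne')

theorem im_inv_one_sub_neg {z : ℂ} (hz : z.im < 0) : ((1 - z)⁻¹).im < 0 := by
  rw [im_inv_one_sub]
  exact div_neg_of_neg_of_pos hz (normSq_one_sub_pos_of_im_ne_zero hz.ne)

end Complex

namespace Real

theorem sin_two_pi_mul_pos {u : ℝ} (n : ℤ) (h₁ : n < u) (h₂ : u < n + 1 / 2) :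
    0 < sin (2 * π * u) := by
  rw [← sin_sub_int_mul_two_pi _ n]
  apply sin_pos_of_pos_of_lt_pi <;> nlinarith [pi_pos]

theorem sin_two_pi_mul_neg {u : ℝ} (n : ℤ) (h₁ : n - 1 / 2 < u) (h₂ : u < n) :
    sin (2 * π * u) < 0 := by
  rw [← sin_sub_int_mul_two_pi _ n]
  apply sin_neg_of_neg_of_neg_pi_lt <;> nlinarith [pi_pos]

end Real

theorem zz_im (u V : ℝ) :
    (zz u V).im = Real.exp (-(2 * Real.pi * V)) * Real.sin (2 * Real.pi * u) := by
  have h : 2 * Real.pi * I * ((u : ℂ) + (V : ℂ) * I) =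
      ⟨-(2 * Real.pi * V), 2 * Real.pi * u⟩ := by
    apply Complex.ext <;> simp
  rw [zz, h, exp_im]

theorem zz_mul (t s X Y : ℝ) : zz t X * zz s Y = zz (t + s) (X + Y) := by
  rw [zz, zz, zz, ← Complex.exp_add]
  push_cast
  ring_nf

theorem zz_div (t s X Y : ℝ) : zz t X / zz s Y = zz (t - s) (X - Y) := by
  rw [zz, zz, zz, ← Complex.exp_sub]
  push_cast
  ring_nf

theorem aa_pos {t : ℝ} (X : ℝ) (ht : 1 / 2 < t) (ht1 : t < 1) : 0 < aa t X := by
  refine neg_pos.mpr (im_inv_one_sub_neg ?_)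
  rw [zz_im]
  exact mul_neg_of_pos_of_neg (Real.exp_pos _) (Real.sin_two_pi_mul_neg 1 (by norm_num; linarith)
    (by norm_num; linarith))

theorem bb_pos {t s : ℝ} (X Y : ℝ) (hts1 : 1 < t + s) (hts2 : t + s < 3 / 2) :
    0 < bb t s X Y := by
  rw [bb, zz_mul]
  refine im_inv_one_sub_pos ?_
  rw [zz_im]
  exact mul_pos (Real.exp_pos _) (Real.sin_two_pi_mul_pos 1 (by norm_num; linarith)
    (by norm_num; linarith))

theorem cc_pos {t s : ℝ} (X Y : ℝ) (hd1 : 0 < t - s) (hd2 : t - s < 1 / 2) :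
    0 < cc t s X Y := by
  rw [cc, zz_div]
  refine im_inv_one_sub_pos ?_
  rw [zz_im]
  exact mul_pos (Real.exp_pos _) (Real.sin_two_pi_mul_pos 0 (by simpa using hd1)
    (by simpa using hd2))

/-- For `1/2 < t < 1`, `1 < t+s < 3/2`, `0 < t-s < 1/2`, the matrix
`2π (3a+b+c, b-c; b-c, b+c)` is positive definite. -/
theorem hessian_posdef (t s X Y : ℝ)
    (ht : 1/2 < t) (ht1 : t < 1) (hts1 : 1 < t + s) (hts2 : t + s < 3/2)
    (hd1 : 0 < t - s) (hd2 : t - s < 1/2) :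
    ((2 * Real.pi) •
      (!![3 * aa t X + bb t s X Y + cc t s X Y, bb t s X Y - cc t s X Y;
          bb t s X Y - cc t s X Y, bb t s X Y + cc t s X Y] :
        Matrix (Fin 2) (Fin 2) ℝ)).PosDef := by
  have ha : 0 < 3 * aa t X := by linarith [aa_pos X ht ht1]
  exact (posDef_add_add_sub ha (bb_pos X Y hts1 hts2) (cc_pos X Y hd1 hd2)).smul
    (by positivity)
end

section
/- For c ∈ [1/2, 1), letting T be a complex number with e^{2πiT} = 1 - 2i sin(πc), the real part of log(1 - e^{2πi(T+c)}) equals log(4 sin(πc) sin(πc/2)), and the real part of log(1 - e^{2πi(T-c)}) equals log(4 sin(πc) cos(πc/2)). Consequently Re(-log(1 - e^{2πi(T+c)}) + log(1 - e^{2πi(T-c)})) = log(cot(πc/2)). -/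
open Complex

/-!
Put `u = e^{iπc}`, so that `e^{2πiT} = 1 - (u - u⁻¹)` and `e^{±2πic} = u^{±2}`. Then
`1 - e^{2πi(T+c)} = (u - u⁻¹) u (u - 1)` and `1 - e^{2πi(T-c)} = (u - u⁻¹) u⁻¹ (u⁻¹ + 1)`,
and since `|u| = 1`, `|u - u⁻¹| = 2 sin(πc)`, `|u - 1| = 2 sin(πc/2)`, `|u⁻¹ + 1| = 2 cos(πc/2)`.
The real part of `log` is the logarithm of the modulus.
-/

namespace Complex

theorem two_mul_I_mul_sin (z : ℂ) : 2 * I * sin z = exp (I * z) - (exp (I * z))⁻¹ := by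
  rw [sin, ← exp_neg, show -z * I = -(I * z) by ring, show z * I = I * z by ring]
  ring_nf
  rw [I_sq]
  ring

theorem one_sub_mul_exp_two_mul (z : ℂ) :
    1 - (1 - 2 * I * sin z) * exp (I * (2 * z)) =
      2 * I * sin z * exp (I * z) * (exp (I * z) - 1) := by
  rw [two_mul_I_mul_sin, show I * (2 * z) = I * z + I * z by ring, exp_add]
  field_simp [exp_ne_zero]
  ring

theorem one_sub_mul_exp_neg_two_mul (z : ℂ) :
    1 - (1 - 2 * I * sin z) * exp (I * -(2 * z)) =
      2 * I * sin z * (exp (I * z))⁻¹ * ((exp (I * z))⁻¹ + 1) := by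
  rw [two_mul_I_mul_sin, show I * -(2 * z) = -(I * z + I * z) by ring, exp_neg, exp_add]
  field_simp [exp_ne_zero]
  ring

theorem norm_exp_I_mul_ofReal_add_one (x : ℝ) : ‖exp (I * x) + 1‖ = 2 * |Real.cos (x / 2)| := by
  have h : exp (I * x) + 1 = -(exp (I * ↑(x + Real.pi)) - 1) := by
    rw [ofReal_add, mul_add, exp_add, mul_comm I (Real.pi : ℂ), exp_pi_mul_I]
    ring
  rw [h, norm_neg, norm_exp_I_mul_ofReal_sub_one, add_div, Real.sin_add_pi_div_two, norm_mul,
    Real.norm_two, Real.norm_eq_abs]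

theorem norm_one_sub_mul_exp_two_mul (x : ℝ) :
    ‖1 - (1 - 2 * I * Real.sin x) * exp (I * ↑(2 * x))‖ =
      4 * |Real.sin x| * |Real.sin (x / 2)| := by
  rw [ofReal_sin, ofReal_mul, ofReal_ofNat, one_sub_mul_exp_two_mul, norm_mul, norm_mul, norm_mul,
    norm_exp_I_mul_ofReal, norm_exp_I_mul_ofReal_sub_one, norm_mul, norm_mul, ← ofReal_sin]
  simp only [norm_ofNat, norm_I, norm_real, Real.norm_eq_abs]
  ring

theorem norm_one_sub_mul_exp_neg_two_mul (x : ℝ) :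
    ‖1 - (1 - 2 * I * Real.sin x) * exp (I * ↑(-(2 * x)))‖ =
      4 * |Real.sin x| * |Real.cos (x / 2)| := by
  rw [ofReal_sin, ofReal_neg, ofReal_mul, ofReal_ofNat, one_sub_mul_exp_neg_two_mul, norm_mul,
    norm_mul, norm_mul, norm_inv, norm_exp_I_mul_ofReal, ← exp_neg, ← mul_neg, ← ofReal_neg,
    norm_exp_I_mul_ofReal_add_one, norm_mul, ← ofReal_sin]
  simp only [norm_ofNat, norm_I, norm_real, Real.norm_eq_abs, neg_div, Real.cos_neg]
  ring

end Complex

/-- For `c ∈ [1/2,1)` and `T` with `e^{2πiT} = 1 - 2i sin(πc)`: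
`Re log(1 - e^{2πi(T+c)}) = log(4 sin(πc) sin(πc/2))`,
`Re log(1 - e^{2πi(T-c)}) = log(4 sin(πc) cos(πc/2))`, and consequently
`Re(-log(1 - e^{2πi(T+c)}) + log(1 - e^{2πi(T-c)})) = log(cot(πc/2))`. -/
theorem re_log_identities (c : ℝ) (hc : 1/2 ≤ c) (hc1 : c < 1) (T : ℂ)
    (hT : Complex.exp (2 * Real.pi * Complex.I * T) = 1 - 2 * Complex.I * Real.sin (Real.pi * c)) :
    (Complex.log (1 - Complex.exp (2 * Real.pi * Complex.I * (T + (c:ℂ))))).re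
        = Real.log (4 * Real.sin (Real.pi * c) * Real.sin (Real.pi * c / 2)) ∧
    (Complex.log (1 - Complex.exp (2 * Real.pi * Complex.I * (T - (c:ℂ))))).re
        = Real.log (4 * Real.sin (Real.pi * c) * Real.cos (Real.pi * c / 2)) ∧
    (-(Complex.log (1 - Complex.exp (2 * Real.pi * Complex.I * (T + (c:ℂ)))))
        + Complex.log (1 - Complex.exp (2 * Real.pi * Complex.I * (T - (c:ℂ))))).re
      = Real.log (Real.cos (Real.pi * c / 2) / Real.sin (Real.pi * c / 2)) := by
  have hpi := Real.pi_pos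
  have hsin : 0 < Real.sin (Real.pi * c) :=
    Real.sin_pos_of_pos_of_lt_pi (by nlinarith) (by nlinarith)
  have hsin_half : 0 < Real.sin (Real.pi * c / 2) :=
    Real.sin_pos_of_pos_of_lt_pi (by nlinarith) (by nlinarith)
  have hcos_half : 0 < Real.cos (Real.pi * c / 2) :=
    Real.cos_pos_of_mem_Ioo ⟨by nlinarith, by nlinarith⟩
  have hplus : exp (2 * Real.pi * I * (T + c)) =
      (1 - 2 * I * Real.sin (Real.pi * c)) * exp (I * ↑(2 * (Real.pi * c))) := by
    rw [← hT, ← exp_add]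
    push_cast
    ring_nf
  have hminus : exp (2 * Real.pi * I * (T - c)) =
      (1 - 2 * I * Real.sin (Real.pi * c)) * exp (I * ↑(-(2 * (Real.pi * c)))) := by
    rw [← hT, ← exp_add]
    push_cast
    ring_nf
  have hre_plus : (log (1 - exp (2 * Real.pi * I * (T + c)))).re =
      Real.log (4 * Real.sin (Real.pi * c) * Real.sin (Real.pi * c / 2)) := by
    rw [log_re, hplus, norm_one_sub_mul_exp_two_mul, abs_of_pos hsin, abs_of_pos hsin_half]
  have hre_minus : (log (1 - exp (2 * Real.pi * I * (T - c)))).re =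
      Real.log (4 * Real.sin (Real.pi * c) * Real.cos (Real.pi * c / 2)) := by
    rw [log_re, hminus, norm_one_sub_mul_exp_neg_two_mul, abs_of_pos hsin, abs_of_pos hcos_half]
  refine ⟨hre_plus, hre_minus, ?_⟩
  rw [add_re, neg_re, hre_plus, hre_minus, neg_add_eq_sub, ← Real.log_div (by positivity)
    (by positivity), mul_div_mul_left _ _ (by positivity)]
end

section
/- Fix real numbers p ≥ 1 and n, and consider the piecewise-linear function F(X,Y) on ℝ² defined (for fixed parameters (t,s) with 1 < t+s < 2, 0 < t-s < 1, 1/2 < t < 1) by F(X,Y) = [((t+s)-3/2)(X+Y) if X+Y<0, else 0] + [((t-s)-1/2)(X-Y) if X-Y<0, else 0] + [(3/2-3t)X if X<0, else 0] + (p + 3/2 + n - (2p+1)s)Y + X. If (t,s) satisfies the four strict inequalities (p+n+1-t)/(2p-1) < s < (p+n+t)/(2p-1) and (p+n+t)/(2p) < s < (p+2+n-t)/(2p), then F(X,Y) → +∞ as X² + Y² → ∞. -/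
private lemma ite_neg_part (k u : ℝ) (h : u ≤ 0) : (if u < 0 then k * u else 0) = k * u := by
  rcases lt_or_eq_of_le h with h0 | h0
  · rw [if_pos h0]
  · rw [if_neg (by rw [h0]; exact lt_irrefl 0), h0, mul_zero]

private lemma ite_pos_part (k u : ℝ) (h : 0 ≤ u) : (if u < 0 then k * u else 0) = 0 :=
  if_neg (not_lt.2 h)

set_option maxHeartbeats 1000000 in
/-- For parameters `p ≥ 1`, `n`, and `(t,s)` in the region `Uₙ`, the piecewise linear
function `F(X,Y)` tends to `+∞` as `X² + Y² → ∞`. -/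
theorem F_tendsto_infty (p n t s : ℝ) (hp : 1 ≤ p)
    (h1 : 1 < t + s) (h2 : t + s < 2) (h3 : 0 < t - s) (h4 : t - s < 1)
    (h5 : 1/2 < t) (h6 : t < 1)
    (hU1 : (p + n + 1 - t) / (2 * p - 1) < s) (hU2 : s < (p + n + t) / (2 * p - 1))
    (hU3 : (p + n + t) / (2 * p) < s) (hU4 : s < (p + 2 + n - t) / (2 * p)) :
    ∀ M : ℝ, ∃ R : ℝ, ∀ X Y : ℝ, X ^ 2 + Y ^ 2 > R ^ 2 →
      (if X + Y < 0 then ((t + s) - 3/2) * (X + Y) else 0)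
        + (if X - Y < 0 then ((t - s) - 1/2) * (X - Y) else 0)
        + (if X < 0 then (3/2 - 3 * t) * X else 0)
        + (p + 3/2 + n - (2 * p + 1) * s) * Y + X > M := by
  have hden1 : (0:ℝ) < 2 * p - 1 := by linarith
  have hden2 : (0:ℝ) < 2 * p := by linarith
  have hC : 0 < t + (2*p-1)*s - p - n - 1 := by
    have := (div_lt_iff₀ hden1).mp hU1; nlinarith
  have hB : 0 < t + p + n - (2*p-1)*s := by
    have := (lt_div_iff₀ hden1).mp hU2; nlinarith
  have hD : 0 < 2*p*s - (p + n + t) := by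
    have := (div_lt_iff₀ hden2).mp hU3; nlinarith
  have hA : 0 < p + 2 + n - t - 2*p*s := by
    have := (lt_div_iff₀ hden2).mp hU4; nlinarith
  have hc1 : p + 3/2 + n - (2*p+1)*s < 1 := by nlinarith
  have hc2 : -1 < p + 3/2 + n - (2*p+1)*s := by nlinarith
  obtain ⟨δ, hδ, b1, b2, b3, b4, b5, b6, b7, b8⟩ :
      ∃ δ : ℝ, 0 < δ ∧ δ ≤ 1/2 ∧ δ ≤ (1 + (p + 3/2 + n - (2*p+1)*s))/2
        ∧ δ ≤ p+2+n-t-2*p*s ∧ δ ≤ (t+p+n-(2*p-1)*s)/2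
        ∧ δ ≤ t - 1/2 ∧ δ ≤ (t+(2*p-1)*s-p-n-1)/2
        ∧ δ ≤ 2*p*s-(p+n+t) ∧ δ ≤ (1 - (p + 3/2 + n - (2*p+1)*s))/2 := by
    refine ⟨min (min (min ((1:ℝ)/2) ((1 + (p + 3/2 + n - (2*p+1)*s))/2))
        (min (p+2+n-t-2*p*s) ((t+p+n-(2*p-1)*s)/2)))
      (min (min (t - 1/2) ((t+(2*p-1)*s-p-n-1)/2))
        (min (2*p*s-(p+n+t)) ((1 - (p + 3/2 + n - (2*p+1)*s))/2))), ?_, ?_, ?_, ?_, ?_, ?_, ?_, ?_, ?_⟩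
    · refine lt_min (lt_min (lt_min (by norm_num) (by linarith))
        (lt_min (by linarith) (by linarith))) ?_
      exact lt_min (lt_min (by linarith) (by linarith)) (lt_min (by linarith) (by linarith))
    · exact (min_le_left _ _).trans ((min_le_left _ _).trans (min_le_left _ _))
    · exact (min_le_left _ _).trans ((min_le_left _ _).trans (min_le_right _ _))
    · exact (min_le_left _ _).trans ((min_le_right _ _).trans (min_le_left _ _))
    · exact (min_le_left _ _).trans ((min_le_right _ _).trans (min_le_right _ _))
    · exact (min_le_right _ _).trans ((min_le_left _ _).trans (min_le_left _ _))
    · exact (min_le_right _ _).trans ((min_le_left _ _).trans (min_le_right _ _))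
    · exact (min_le_right _ _).trans ((min_le_right _ _).trans (min_le_left _ _))
    · exact (min_le_right _ _).trans ((min_le_right _ _).trans (min_le_right _ _))
  clear hU1 hU2 hU3 hU4 hden1 hden2 hC hB hD hA hc1 hc2 hp h1 h2 h3 h4 h5 h6
  have key : ∀ X Y : ℝ,
      δ * (|X| + |Y|) ≤ (if X + Y < 0 then ((t + s) - 3/2) * (X + Y) else 0)
        + (if X - Y < 0 then ((t - s) - 1/2) * (X - Y) else 0)
        + (if X < 0 then (3/2 - 3 * t) * X else 0)
        + (p + 3/2 + n - (2 * p + 1) * s) * Y + X := by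
    intro X Y
    rcases le_total 0 X with hX | hX <;> rcases le_total 0 Y with hY | hY
    · -- first quadrant
      rw [abs_of_nonneg hX, abs_of_nonneg hY,
        ite_pos_part _ _ (by linarith : (0:ℝ) ≤ X + Y), ite_pos_part _ _ hX]
      rcases le_total Y X with h | h
      · rw [ite_pos_part _ _ (by linarith : (0:ℝ) ≤ X - Y)]
        nlinarith [mul_nonneg (by linarith : (0:ℝ) ≤ X - Y) (by linarith : (0:ℝ) ≤ 1 - δ),
          mul_nonneg hY (by linarith : (0:ℝ) ≤ 1 + (p + 3/2 + n - (2*p+1)*s) - 2*δ)]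
      · rw [ite_neg_part _ _ (by linarith : X - Y ≤ 0)]
        nlinarith [mul_nonneg hX (by linarith : (0:ℝ) ≤ 1 + (p + 3/2 + n - (2*p+1)*s) - 2*δ),
          mul_nonneg (by linarith : (0:ℝ) ≤ Y - X) (by linarith : (0:ℝ) ≤ (p+2+n-t-2*p*s) - δ)]
    · -- fourth quadrant : X ≥ 0, Y ≤ 0
      rw [abs_of_nonneg hX, abs_of_nonpos hY,
        ite_pos_part _ _ (by linarith : (0:ℝ) ≤ X - Y), ite_pos_part _ _ hX]
      rcases le_total 0 (X + Y) with h | h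
      · rw [ite_pos_part _ _ h]
        nlinarith [mul_nonneg (by linarith : (0:ℝ) ≤ -Y)
            (by linarith : (0:ℝ) ≤ 1 - (p + 3/2 + n - (2*p+1)*s) - 2*δ),
          mul_nonneg h (by linarith : (0:ℝ) ≤ 1 - δ)]
      · rw [ite_neg_part _ _ h]
        nlinarith [mul_nonneg (by linarith : (0:ℝ) ≤ -X - Y)
            (by linarith : (0:ℝ) ≤ (2*p*s-(p+n+t)) - δ),
          mul_nonneg hX (by linarith : (0:ℝ) ≤ 1 - (p + 3/2 + n - (2*p+1)*s) - 2*δ)]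
    · -- second quadrant : X ≤ 0, Y ≥ 0
      rw [abs_of_nonpos hX, abs_of_nonneg hY,
        ite_neg_part _ _ (by linarith : X - Y ≤ 0), ite_neg_part _ _ hX]
      rcases le_total 0 (X + Y) with h | h
      · rw [ite_pos_part _ _ h]
        nlinarith [mul_nonneg h (by linarith : (0:ℝ) ≤ (p+2+n-t-2*p*s) - δ),
          mul_nonneg (by linarith : (0:ℝ) ≤ -X)
            (by linarith : (0:ℝ) ≤ (t+p+n-(2*p-1)*s) - 2*δ)]
      · rw [ite_neg_part _ _ h]
        nlinarith [mul_nonneg hY (by linarith : (0:ℝ) ≤ (t+p+n-(2*p-1)*s) - 2*δ),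
          mul_nonneg (by linarith : (0:ℝ) ≤ -X - Y) (by linarith : (0:ℝ) ≤ t - 1/2 - δ)]
    · -- third quadrant : X ≤ 0, Y ≤ 0
      rw [abs_of_nonpos hX, abs_of_nonpos hY,
        ite_neg_part _ _ (by linarith : X + Y ≤ 0), ite_neg_part _ _ hX]
      rcases le_total X Y with h | h
      · rw [ite_neg_part _ _ (by linarith : X - Y ≤ 0)]
        nlinarith [mul_nonneg (by linarith : (0:ℝ) ≤ Y - X) (by linarith : (0:ℝ) ≤ t - 1/2 - δ),
          mul_nonneg (by linarith : (0:ℝ) ≤ -Y)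
            (by linarith : (0:ℝ) ≤ (t+(2*p-1)*s-p-n-1) - 2*δ)]
      · rw [ite_pos_part _ _ (by linarith : (0:ℝ) ≤ X - Y)]
        nlinarith [mul_nonneg (by linarith : (0:ℝ) ≤ -X)
            (by linarith : (0:ℝ) ≤ (t+(2*p-1)*s-p-n-1) - 2*δ),
          mul_nonneg (by linarith : (0:ℝ) ≤ X - Y)
            (by linarith : (0:ℝ) ≤ (2*p*s-(p+n+t)) - δ)]
  intro M
  refine ⟨max (M/δ) 0 + 1, fun X Y hXY => ?_⟩
  have hR : 0 < max (M/δ) 0 + 1 := by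
    have := le_max_right (M/δ) 0; linarith
  have hnorm : max (M/δ) 0 + 1 < |X| + |Y| := by
    have hsq : (max (M/δ) 0 + 1)^2 < (|X| + |Y|)^2 := by
      nlinarith [mul_nonneg (abs_nonneg X) (abs_nonneg Y), sq_abs X, sq_abs Y]
    nlinarith [abs_nonneg X, abs_nonneg Y]
  have hδR : M ≤ δ * (max (M/δ) 0 + 1) - δ := by
    have hm1 : M/δ ≤ max (M/δ) 0 := le_max_left _ _
    have hm2 : δ * (M/δ) ≤ δ * max (M/δ) 0 :=
      mul_le_mul_of_nonneg_left hm1 (le_of_lt hδ)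
    rw [mul_div_cancel₀ M (ne_of_gt hδ)] at hm2
    nlinarith
  have hfin : δ * (max (M/δ) 0 + 1) < δ * (|X| + |Y|) := mul_lt_mul_of_pos_left hnorm hδ
  have := key X Y
  linarith
end
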